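/- For all k ≥ 0, W_{k+1} = S_{k,k} · S_{k,k-2} · … · S_{k,k-2⌊k/2⌋} · (k+1), where S_{k,i} denotes the suffix of W_k of length |W_i|, the concatenation runs over the indices k, k-2, …, k-2⌊k/2⌋ in decreasing order, and the final factor is the single letter k+1. (For example, W_5 = 01223234 · 234 · 4 · 5.) -/

import Mathlib

/-!
Shifting every letter by `2` commutes with `phi`, which gives the recurrence
`W (k+2) = W (k+1) · (W k + 2)`. Unfolding it along `k, k-2, k-4, …` expresses `W (k+1)` as
`W k · (W (k-2) + 2) · (W (k-4) + 4) ⋯ (k+1)`, and the same recurrence shows that each block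
`W (k-2i) + 2i` is the suffix of `W k` of length `|W (k-2i)|`.
-/

/-- The morphism `phi` on the alphabet `ℕ`: `phi (2i) = (2i)(2i+1)` and `phi (2i+1) = (2i+2)`. -/
def phi (a : ℕ) : List ℕ := if a % 2 = 0 then [a, a + 1] else [a + 1]

/-- The finite ZWW words: `W n = phi^n(0)`, so `W 0 = 0`, `W 1 = 01`, `W 2 = 012`, `W 3 = 01223`. -/
def W (n : ℕ) : List ℕ := (fun w => w.flatMap phi)^[n] [0]

lemma W_succ (n : ℕ) : W (n + 1) = (W n).flatMap phi :=
  Function.iterate_succ_apply' _ _ _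

lemma phi_add_two (a : ℕ) : phi (a + 2) = (phi a).map (· + 2) := by
  unfold phi
  rw [Nat.add_mod_right]
  split <;> simp

lemma flatMap_phi_map_add_two (w : List ℕ) :
    (w.map (· + 2)).flatMap phi = (w.flatMap phi).map (· + 2) := by
  induction w with
  | nil => rfl
  | cons a t ih => simp [ih, phi_add_two]

lemma W_add_two (k : ℕ) : W (k + 2) = W (k + 1) ++ (W k).map (· + 2) := by
  induction k with
  | zero => rfl
  | succ k ih =>
    rw [W_succ (k + 2), ih, List.flatMap_append, flatMap_phi_map_add_two, ← W_succ, ← W_succ, ih]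

lemma map_add_isSuffix_W (m i : ℕ) : (W m).map (· + 2 * i) <:+ W (m + 2 * i) := by
  induction i with
  | zero => simp
  | succ i ih =>
    have hshift : ((W m).map (· + 2 * i)).map (· + 2) = (W m).map (· + 2 * (i + 1)) := by
      rw [List.map_map]
      rfl
    rw [← hshift, show m + 2 * (i + 1) = m + 2 * i + 2 by ring, W_add_two]
    exact (ih.map _).trans (List.suffix_append _ _)

def shiftedBlocks (k : ℕ) : List ℕ :=
  ((List.range (k / 2 + 1)).map (fun i => (W (k - 2 * i)).map (· + 2 * i))).flatten

lemma shiftedBlocks_add_two (k : ℕ) :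
    shiftedBlocks (k + 2) = W (k + 2) ++ (shiftedBlocks k).map (· + 2) := by
  rw [shiftedBlocks, shiftedBlocks, show (k + 2) / 2 = k / 2 + 1 by omega,
    List.range_succ_eq_map, List.map_cons, List.flatten_cons, List.map_flatten, List.map_map,
    List.map_map]
  congr 1
  · simp
  · congr 1
    refine List.map_congr_left fun i _ => ?_
    simp only [Function.comp_apply, List.map_map, show k + 2 - 2 * (i + 1) = k - 2 * i by omega]
    rfl

lemma W_succ_eq_shiftedBlocks (k : ℕ) : W (k + 1) = shiftedBlocks k ++ [k + 1] := by
  induction k using Nat.twoStepInduction with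
  | zero => rfl
  | one => rfl
  | more k ih _ =>
    rw [W_add_two, ih, shiftedBlocks_add_two, List.map_append, List.append_assoc]
    rfl

/-- For all `k ≥ 0`, `W (k+1) = S k k · S k (k-2) · … · S k (k - 2⌊k/2⌋) · (k+1)`,
where `S k m` is the suffix of `W k` of length `|W m|` and the final factor is the
single letter `k+1`. -/
theorem zww_suffix_factorisation : ∀ k : ℕ,
    W (k + 1) =
      ((List.range (k / 2 + 1)).map
        (fun i => (W k).drop ((W k).length - (W (k - 2 * i)).length))).flatten
      ++ [k + 1] := by
  intro k
  rw [W_succ_eq_shiftedBlocks, shiftedBlocks]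
  congr 2
  refine List.map_congr_left fun i hi => ?_
  have hsuffix := map_add_isSuffix_W (k - 2 * i) i
  rw [Nat.sub_add_cancel (by rw [List.mem_range] at hi; omega)] at hsuffix
  simpa using List.suffix_iff_eq_drop.mp hsuffix
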